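/- For every δ ∈ (0, 1/4] there exists a constant c(δ) > 0 such that for every r ≥ 1, P( log M(r, ψ) ≥ (1/2 + δ) r² ) ≤ exp(−c(δ) r⁴). -/

import Mathlib

open MeasureTheory ProbabilityTheory Metric

/-- The standard complex Gaussian measure on `ℂ`, with density
`π⁻¹ exp (-|w|²)` with respect to Lebesgue measure. -/
noncomputable def stdComplexGaussian : Measure ℂ :=
  volume.withDensity fun w => ENNReal.ofReal (Real.exp (-‖w‖ ^ 2) / Real.pi)

/-- The random entire function `ψ(z) = ∑ ζ_k z^k / √(k!)` built from coefficients `a`. -/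
noncomputable def psiFun (a : ℕ → ℂ) (z : ℂ) : ℂ :=
  ∑' k : ℕ, a k * z ^ k / (Real.sqrt (Nat.factorial k) : ℂ)

/-- `M(r, f) = max_{|z| ≤ r} |f z|`. -/
noncomputable def maxAbs (f : ℂ → ℂ) (r : ℝ) : ℝ :=
  sSup ((fun z => ‖f z‖) '' closedBall (0 : ℂ) r)
lemma lint_gauss_real : ∫⁻ x : ℝ, ENNReal.ofReal (Real.exp (-(1/2:ℝ) * x ^ 2))
    = ENNReal.ofReal (Real.sqrt (2 * Real.pi)) := by
  rw [← ofReal_integral_eq_lintegral_ofReal (integrable_exp_neg_mul_sq (by norm_num))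
    (Filter.Eventually.of_forall fun x => (Real.exp_pos _).le)]
  rw [integral_gaussian]
  congr 2; ring

lemma lint_gauss_complex : ∫⁻ w : ℂ, ENNReal.ofReal (Real.exp (-(1/2:ℝ) * ‖w‖ ^ 2))
    = ENNReal.ofReal (2 * Real.pi) := by
  have hmeas : Measurable fun p : ℝ × ℝ =>
      ENNReal.ofReal (Real.exp (-(1/2:ℝ) * p.1 ^ 2)) * ENNReal.ofReal (Real.exp (-(1/2:ℝ) * p.2 ^ 2)) := by
    fun_prop
  have h1 : ∫⁻ w : ℂ, ENNReal.ofReal (Real.exp (-(1/2:ℝ) * ‖w‖ ^ 2))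
      = ∫⁻ w : ℂ, (ENNReal.ofReal (Real.exp (-(1/2:ℝ) * w.re ^ 2)) *
          ENNReal.ofReal (Real.exp (-(1/2:ℝ) * w.im ^ 2))) := by
    refine lintegral_congr fun w => ?_
    rw [← ENNReal.ofReal_mul (Real.exp_pos _).le, ← Real.exp_add, Complex.sq_norm,
      Complex.normSq_apply]
    ring_nf
  have h2 := Complex.volume_preserving_equiv_real_prod.lintegral_comp hmeas
  simp only [Complex.measurableEquivRealProd_apply] at h2
  have h4 : ∫⁻ p : ℝ × ℝ, (ENNReal.ofReal (Real.exp (-(1/2:ℝ) * p.1 ^ 2)) *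
      ENNReal.ofReal (Real.exp (-(1/2:ℝ) * p.2 ^ 2)))
      = (∫⁻ x : ℝ, ENNReal.ofReal (Real.exp (-(1/2:ℝ) * x ^ 2))) *
        (∫⁻ x : ℝ, ENNReal.ofReal (Real.exp (-(1/2:ℝ) * x ^ 2))) := by
    rw [Measure.volume_eq_prod]
    exact lintegral_prod_mul (f := fun x : ℝ => ENNReal.ofReal (Real.exp (-(1/2:ℝ) * x ^ 2)))
      (g := fun x : ℝ => ENNReal.ofReal (Real.exp (-(1/2:ℝ) * x ^ 2))) (by fun_prop) (by fun_prop)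
  rw [h1, h2, h4, lint_gauss_real, ← ENNReal.ofReal_mul (Real.sqrt_nonneg _),
    Real.mul_self_sqrt (by positivity)]

lemma stdComplexGaussian_tail {t : ℝ} (ht : 0 ≤ t) :
    stdComplexGaussian {w : ℂ | t < ‖w‖}
      ≤ ENNReal.ofReal (2 * Real.exp (-(1/2:ℝ) * t ^ 2)) := by
  have hs : MeasurableSet {w : ℂ | t < ‖w‖} :=
    measurableSet_lt measurable_const continuous_norm.measurable
  rw [stdComplexGaussian, withDensity_apply _ hs]
  have hππ : (0:ℝ) ≤ Real.pi⁻¹ := by positivity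
  have step1 : ∫⁻ w in {w : ℂ | t < ‖w‖},
      ENNReal.ofReal (Real.exp (-‖w‖ ^ 2) / Real.pi)
      ≤ ∫⁻ w in {w : ℂ | t < ‖w‖},
        ENNReal.ofReal (Real.exp (-(1/2:ℝ) * t ^ 2)) *
          ENNReal.ofReal (Real.exp (-(1/2:ℝ) * ‖w‖ ^ 2) * Real.pi⁻¹) := by
    refine setLIntegral_mono' hs (fun w hw => ?_)
    rw [← ENNReal.ofReal_mul (Real.exp_pos _).le]
    apply ENNReal.ofReal_le_ofReal
    rw [div_eq_mul_inv, ← mul_assoc]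
    refine mul_le_mul_of_nonneg_right ?_ hππ
    rw [← Real.exp_add]
    apply Real.exp_le_exp.2
    have ht2 : t ^ 2 ≤ ‖w‖ ^ 2 := by
      have := (le_of_lt (Set.mem_setOf_eq ▸ hw))
      nlinarith
    nlinarith
  refine le_trans step1 ?_
  rw [lintegral_const_mul' _ _ ENNReal.ofReal_ne_top]
  have step2 : ∫⁻ w in {w : ℂ | t < ‖w‖},
      ENNReal.ofReal (Real.exp (-(1/2:ℝ) * ‖w‖ ^ 2) * Real.pi⁻¹)
      ≤ ∫⁻ w : ℂ, ENNReal.ofReal (Real.exp (-(1/2:ℝ) * ‖w‖ ^ 2) * Real.pi⁻¹) :=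
    setLIntegral_le_lintegral _ _
  have step3 : ∫⁻ w : ℂ, ENNReal.ofReal (Real.exp (-(1/2:ℝ) * ‖w‖ ^ 2) * Real.pi⁻¹)
      = ENNReal.ofReal 2 := by
    have : ∀ w : ℂ, ENNReal.ofReal (Real.exp (-(1/2:ℝ) * ‖w‖ ^ 2) * Real.pi⁻¹)
        = ENNReal.ofReal (Real.exp (-(1/2:ℝ) * ‖w‖ ^ 2)) * ENNReal.ofReal Real.pi⁻¹ :=
      fun w => ENNReal.ofReal_mul (Real.exp_pos _).le
    simp_rw [this]
    rw [lintegral_mul_const' _ _ ENNReal.ofReal_ne_top, lint_gauss_complex,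
      ← ENNReal.ofReal_mul (by positivity)]
    congr 1
    field_simp
  calc ENNReal.ofReal (Real.exp (-(1/2:ℝ) * t ^ 2)) *
        ∫⁻ w in {w : ℂ | t < ‖w‖},
          ENNReal.ofReal (Real.exp (-(1/2:ℝ) * ‖w‖ ^ 2) * Real.pi⁻¹)
      ≤ ENNReal.ofReal (Real.exp (-(1/2:ℝ) * t ^ 2)) * ENNReal.ofReal 2 := by
        rw [← step3]; exact mul_le_mul_right step2 _
    _ = ENNReal.ofReal (2 * Real.exp (-(1/2:ℝ) * t ^ 2)) := by
        rw [← ENNReal.ofReal_mul (Real.exp_pos _).le, mul_comm]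

lemma stdComplexGaussian_closedBall_pos {t : ℝ} (ht : 0 < t) :
    0 < stdComplexGaussian (closedBall (0:ℂ) t) := by
  rw [stdComplexGaussian, withDensity_apply _ measurableSet_closedBall]
  have hlb : ∀ w ∈ closedBall (0:ℂ) t,
      ENNReal.ofReal (Real.exp (-t ^ 2) / Real.pi)
        ≤ ENNReal.ofReal (Real.exp (-‖w‖ ^ 2) / Real.pi) := by
    intro w hw
    apply ENNReal.ofReal_le_ofReal
    have habs : ‖w‖ ≤ t := by
      simpa [Complex.dist_eq] using mem_closedBall.1 hw
    have hexp : Real.exp (-t ^ 2) ≤ Real.exp (-‖w‖ ^ 2) := by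
      apply Real.exp_le_exp.2
      nlinarith [norm_nonneg w]
    gcongr
  have h0 : 0 < ENNReal.ofReal (Real.exp (-t ^ 2) / Real.pi) * volume (closedBall (0:ℂ) t) := by
    apply ENNReal.mul_pos
    · simp [ENNReal.ofReal_pos]
      positivity
    · exact (measure_closedBall_pos volume (0:ℂ) ht).ne'
  refine lt_of_lt_of_le h0 ?_
  rw [← setLIntegral_const]
  exact setLIntegral_mono' measurableSet_closedBall hlb

noncomputable def vpar (δ : ℝ) : ℝ := Real.sqrt ((1 + δ/2) / (1 + 3*δ/4))
noncomputable def epar (δ : ℝ) : ℝ := δ * (1 - vpar δ) / 4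

lemma vpar_pos {δ : ℝ} (hδ : 0 < δ) : 0 < vpar δ := Real.sqrt_pos.2 (by positivity)

lemma vpar_lt_one {δ : ℝ} (hδ : 0 < δ) : vpar δ < 1 := by
  rw [vpar, show (1:ℝ) = Real.sqrt 1 by simp]
  apply Real.sqrt_lt_sqrt (by positivity)
  rw [div_lt_one (by positivity)]
  linarith

lemma epar_pos {δ : ℝ} (hδ : 0 < δ) : 0 < epar δ := by
  have := vpar_lt_one hδ
  rw [epar]; nlinarith

lemma vpar_mul {δ : ℝ} (hδ : 0 < δ) :
    vpar δ * Real.sqrt (1 + 3*δ/4) = Real.sqrt (1 + δ/2) := by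
  rw [vpar, Real.sqrt_div (by positivity), div_mul_cancel₀]
  exact (Real.sqrt_pos.2 (by positivity)).ne'

lemma pow_div_sqrt_factorial_le {ρ : ℝ} (hρ : 0 ≤ ρ) (k : ℕ) :
    ρ ^ k / Real.sqrt (Nat.factorial k) ≤ Real.exp (ρ ^ 2 / 2) := by
  have h1 : (ρ ^ 2) ^ k / (Nat.factorial k : ℝ) ≤ Real.exp (ρ ^ 2) := by
    refine le_trans ?_ (Real.sum_le_exp_of_nonneg (by positivity) (k+1))
    refine Finset.single_le_sum (f := fun i => (ρ ^ 2) ^ i / (Nat.factorial i : ℝ))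
      (fun i _ => by positivity) (Finset.self_mem_range_succ k)
  have h2 : ρ ^ k = Real.sqrt ((ρ ^ 2) ^ k) := by
    rw [← pow_mul, mul_comm, pow_mul, Real.sqrt_sq (by positivity)]
  rw [h2, ← Real.sqrt_div (by positivity), Real.exp_half]
  exact Real.sqrt_le_sqrt h1

lemma det_bound {δ : ℝ} (hδ : 0 < δ) {r : ℝ} (hr : 1 ≤ r) (b : ℕ → ℂ)
    (hb : ∀ k, ‖b k‖ ≤ epar δ * r ^ 2 * Real.sqrt (1 + δ/2) ^ k) :
    Real.log (maxAbs (psiFun b) r) < (1/2 + δ) * r ^ 2 := by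
  have hr0 : (0:ℝ) < r := lt_of_lt_of_le one_pos hr
  set v := vpar δ with hv
  have hv0 : 0 < v := vpar_pos hδ
  have hv1 : v < 1 := vpar_lt_one hδ
  set ρ := Real.sqrt (1 + 3*δ/4) * r with hρdef
  have hρ0 : 0 ≤ ρ := by positivity
  have hρsq : ρ ^ 2 = (1 + 3*δ/4) * r ^ 2 := by
    rw [hρdef, mul_pow, Real.sq_sqrt (by positivity)]
  -- term bound
  have hterm : ∀ k, epar δ * r ^ 2 * Real.sqrt (1 + δ/2) ^ k * (r ^ k / Real.sqrt (Nat.factorial k))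
      ≤ epar δ * r ^ 2 * Real.exp (ρ ^ 2 / 2) * v ^ k := by
    intro k
    have hkey : Real.sqrt (1 + δ/2) ^ k * (r ^ k / Real.sqrt (Nat.factorial k))
        ≤ Real.exp (ρ ^ 2 / 2) * v ^ k := by
      have h1 : Real.sqrt (1 + δ/2) ^ k * r ^ k = v ^ k * ρ ^ k := by
        rw [← mul_pow, ← mul_pow, hρdef, ← mul_assoc, vpar_mul hδ]
      calc Real.sqrt (1 + δ/2) ^ k * (r ^ k / Real.sqrt (Nat.factorial k))
          = v ^ k * (ρ ^ k / Real.sqrt (Nat.factorial k)) := by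
            rw [← mul_div_assoc, h1, mul_div_assoc]
        _ ≤ v ^ k * Real.exp (ρ ^ 2 / 2) := by
            have := pow_div_sqrt_factorial_le hρ0 k
            exact mul_le_mul_of_nonneg_left this (by positivity)
        _ = Real.exp (ρ ^ 2 / 2) * v ^ k := mul_comm _ _
    calc epar δ * r ^ 2 * Real.sqrt (1 + δ/2) ^ k * (r ^ k / Real.sqrt (Nat.factorial k))
        = epar δ * r ^ 2 * (Real.sqrt (1 + δ/2) ^ k * (r ^ k / Real.sqrt (Nat.factorial k))) := by
          ring
      _ ≤ epar δ * r ^ 2 * (Real.exp (ρ ^ 2 / 2) * v ^ k) := by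
          refine mul_le_mul_of_nonneg_left hkey (mul_nonneg (epar_pos hδ).le (by positivity))
      _ = epar δ * r ^ 2 * Real.exp (ρ ^ 2 / 2) * v ^ k := by ring
  have hgeo : Summable (fun k => epar δ * r ^ 2 * Real.exp (ρ ^ 2 / 2) * v ^ k) :=
    (summable_geometric_of_lt_one hv0.le hv1).mul_left _
  set E := epar δ * r ^ 2 * Real.exp (ρ ^ 2 / 2) * (1 - v)⁻¹ with hE
  have hsumgeo : ∑' k : ℕ, epar δ * r ^ 2 * Real.exp (ρ ^ 2 / 2) * v ^ k = E := by
    rw [tsum_mul_left, tsum_geometric_of_lt_one hv0.le hv1]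
  have hgle : ∀ k, ‖b k‖ * r ^ k / Real.sqrt (Nat.factorial k)
      ≤ epar δ * r ^ 2 * Real.exp (ρ ^ 2 / 2) * v ^ k := by
    intro k
    refine le_trans ?_ (hterm k)
    rw [mul_div_assoc]
    exact mul_le_mul_of_nonneg_right (hb k) (by positivity)
  have hg : Summable (fun k => ‖b k‖ * r ^ k / Real.sqrt (Nat.factorial k)) :=
    Summable.of_nonneg_of_le (fun k => by positivity) hgle hgeo
  have hE0 : 0 ≤ E := by
    have h1v : 0 < 1 - v := by linarith
    have := epar_pos hδ
    rw [hE]; positivity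
  have hzbound : ∀ z ∈ closedBall (0:ℂ) r, ‖psiFun b z‖ ≤ E := by
    intro z hz
    have hzr : ‖z‖ ≤ r := by simpa [Complex.dist_eq] using mem_closedBall.1 hz
    have hnorm_le : ∀ k, ‖b k * z ^ k / (Real.sqrt (Nat.factorial k) : ℂ)‖
        ≤ ‖b k‖ * r ^ k / Real.sqrt (Nat.factorial k) := by
      intro k
      rw [norm_div, norm_mul, norm_pow]
      have h1 : ‖((Real.sqrt (Nat.factorial k) : ℝ) : ℂ)‖ = Real.sqrt (Nat.factorial k) := by
        rw [Complex.norm_real, Real.norm_eq_abs, abs_of_nonneg (Real.sqrt_nonneg _)]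
      rw [h1]
      have h2 : ‖z‖ ^ k ≤ r ^ k := pow_le_pow_left₀ (norm_nonneg z) hzr k
      have h3 : ‖b k‖ * ‖z‖ ^ k ≤ ‖b k‖ * r ^ k :=
        mul_le_mul_of_nonneg_left h2 (norm_nonneg _)
      exact div_le_div_of_nonneg_right h3 (Real.sqrt_nonneg _)
    have hsummable_norm : Summable (fun k => ‖b k * z ^ k / (Real.sqrt (Nat.factorial k) : ℂ)‖) :=
      Summable.of_nonneg_of_le (fun k => norm_nonneg _) hnorm_le hg
    calc ‖psiFun b z‖ = ‖psiFun b z‖ := rfl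
      _ ≤ ∑' k : ℕ, ‖b k * z ^ k / (Real.sqrt (Nat.factorial k) : ℂ)‖ :=
          norm_tsum_le_tsum_norm hsummable_norm
      _ ≤ ∑' k : ℕ, ‖b k‖ * r ^ k / Real.sqrt (Nat.factorial k) :=
          Summable.tsum_le_tsum hnorm_le hsummable_norm hg
      _ ≤ ∑' k : ℕ, epar δ * r ^ 2 * Real.exp (ρ ^ 2 / 2) * v ^ k :=
          Summable.tsum_le_tsum hgle hg hgeo
      _ = E := hsumgeo
  have hM : maxAbs (psiFun b) r ≤ E := by
    apply Real.sSup_le _ hE0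
    rintro x ⟨z, hz, rfl⟩
    exact hzbound z hz
  have hElt : E < Real.exp ((1/2 + δ) * r ^ 2) := by
    have h1v : 0 < 1 - v := by linarith
    have hρ2 : ρ ^ 2 / 2 = (1/2 + 3*δ/8) * r ^ 2 := by rw [hρsq]; ring
    have hE' : E = δ/4 * r ^ 2 * Real.exp ((1/2 + 3*δ/8) * r ^ 2) := by
      rw [hE, epar, hρ2]
      field_simp
      ring
    have h58 : δ/4 * r ^ 2 < Real.exp (5*δ/8 * r ^ 2) := by
      have h2 : δ/4 * r ^ 2 ≤ 5*δ/8 * r ^ 2 := by nlinarith [sq_nonneg r]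
      have h3 := Real.add_one_le_exp (5*δ/8 * r ^ 2)
      linarith
    calc E = δ/4 * r ^ 2 * Real.exp ((1/2 + 3*δ/8) * r ^ 2) := hE'
      _ < Real.exp (5*δ/8 * r ^ 2) * Real.exp ((1/2 + 3*δ/8) * r ^ 2) := by
          exact mul_lt_mul_of_pos_right h58 (Real.exp_pos _)
      _ = Real.exp ((1/2 + δ) * r ^ 2) := by rw [← Real.exp_add]; ring_nf
  have hM0 : 0 ≤ maxAbs (psiFun b) r := by
    apply Real.sSup_nonneg
    rintro x ⟨z, hz, rfl⟩
    exact norm_nonneg _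
  rcases eq_or_lt_of_le hM0 with h0 | h0
  · rw [← h0, Real.log_zero]
    nlinarith [sq_nonneg r, mul_pos hr0 hr0]
  · rw [Real.log_lt_iff_lt_exp h0]
    exact lt_of_le_of_lt hM hElt

lemma one_sub_sum_le_prod_one_sub (s : Finset ℕ) (p : ℕ → ℝ) (h0 : ∀ k ∈ s, 0 ≤ p k)
    (h1 : ∀ k ∈ s, p k ≤ 1) : 1 - ∑ k ∈ s, p k ≤ ∏ k ∈ s, (1 - p k) := by
  classical
  induction s using Finset.induction with
  | empty => simp
  | @insert a s ha ih =>
    rw [Finset.sum_insert ha, Finset.prod_insert ha]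
    have hpa0 : 0 ≤ p a := h0 a (Finset.mem_insert_self a s)
    have hpa1 : p a ≤ 1 := h1 a (Finset.mem_insert_self a s)
    have hS0 : 0 ≤ ∑ k ∈ s, p k :=
      Finset.sum_nonneg fun k hk => h0 k (Finset.mem_insert_of_mem hk)
    have ih' := ih (fun k hk => h0 k (Finset.mem_insert_of_mem hk))
      (fun k hk => h1 k (Finset.mem_insert_of_mem hk))
    have h2 : (1 - p a) * (1 - ∑ k ∈ s, p k) ≤ (1 - p a) * ∏ k ∈ s, (1 - p k) :=
      mul_le_mul_of_nonneg_left ih' (by linarith)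
    nlinarith

set_option maxHeartbeats 3000000 in
theorem log_max_upper_large_deviations
    {Ω : Type*} [MeasureSpace Ω] [IsProbabilityMeasure (ℙ : Measure Ω)]
    (ζ : ℕ → Ω → ℂ) (hmeas : ∀ k, Measurable (ζ k))
    (hindep : iIndepFun ζ ℙ)
    (hdist : ∀ k, Measure.map (ζ k) ℙ = stdComplexGaussian) :
    ∀ δ : ℝ, δ ∈ Set.Ioc (0 : ℝ) (1 / 4) → ∃ c > (0 : ℝ), ∀ r : ℝ, 1 ≤ r →
      ℙ {ω | (1 / 2 + δ) * r ^ 2 ≤ Real.log (maxAbs (psiFun (fun k => ζ k ω)) r)}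
        ≤ ENNReal.ofReal (Real.exp (-c * r ^ 4)) := by
  intro δ hδmem
  obtain ⟨hδ0, hδ4⟩ := hδmem
  set ε := epar δ with hεdef
  have hε0 : 0 < ε := epar_pos hδ0
  set η := Real.sqrt (1 + δ/2) with hηdef
  have hη1 : 1 ≤ η := by
    rw [hηdef]
    calc (1:ℝ) = Real.sqrt 1 := by simp
      _ ≤ Real.sqrt (1 + δ/2) := Real.sqrt_le_sqrt (by linarith)
  have hη0 : 0 < η := lt_of_lt_of_le one_pos hη1
  set w := Real.exp (-(ε^2*δ/4)) with hwdef
  have hw0 : 0 < w := Real.exp_pos _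
  have hw1 : w < 1 := by
    rw [hwdef, Real.exp_lt_one_iff]
    have : 0 < ε^2*δ/4 := by positivity
    linarith
  set D := 2 * (1-w)⁻¹ with hDdef
  have hD0 : 0 < D := by
    have : 0 < 1 - w := by linarith
    positivity
  -- the coefficient sets
  set T : ℝ → ℕ → Set ℂ := fun r k => {x : ℂ | ε * r^2 * η^k < ‖x‖} with hTdef
  have hTmeas : ∀ r k, MeasurableSet (T r k) :=
    fun r k => measurableSet_lt measurable_const continuous_norm.measurable
  set B : ℝ → ℕ → Set Ω := fun r k => ζ k ⁻¹' (T r k) with hBdef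
  have hBmeas : ∀ r k, MeasurableSet (B r k) := fun r k => (hmeas k) (hTmeas r k)
  -- inclusion of the event in the union of coefficient events
  have hinc : ∀ r : ℝ, 1 ≤ r →
      {ω | (1 / 2 + δ) * r ^ 2 ≤ Real.log (maxAbs (psiFun (fun k => ζ k ω)) r)}
        ⊆ ⋃ k : ℕ, B r k := by
    intro r hr ω hω
    by_contra hnot
    simp only [Set.mem_iUnion, hBdef, Set.mem_preimage, hTdef, Set.mem_setOf_eq,
      not_exists, not_lt] at hnot
    have := det_bound hδ0 hr (fun k => ζ k ω) (fun k => hnot k)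
    simp only [Set.mem_setOf_eq] at hω
    linarith
  -- tail bound for each coefficient event
  have hpB : ∀ r : ℝ, 1 ≤ r → ∀ k : ℕ,
      ℙ (B r k) ≤ ENNReal.ofReal (2 * Real.exp (-(ε^2*r^4/2)) * w ^ k) := by
    intro r hr k
    have hr0 : (0:ℝ) < r := lt_of_lt_of_le one_pos hr
    have ht0 : 0 ≤ ε * r^2 * η^k := by positivity
    have h1 : ℙ (B r k) = stdComplexGaussian (T r k) := by
      rw [hBdef, ← Measure.map_apply (hmeas k) (hTmeas r k), hdist k]
    rw [h1]
    refine le_trans (stdComplexGaussian_tail ht0) (ENNReal.ofReal_le_ofReal ?_)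
    have hsq : (ε * r^2 * η^k)^2 = ε^2 * r^4 * ((1 + δ/2)^k) := by
      have hη2 : η ^ 2 = 1 + δ/2 := Real.sq_sqrt (by linarith)
      have h2 : (η ^ k) ^ 2 = (1 + δ/2) ^ k := by
        rw [← pow_mul η k 2, mul_comm k 2, pow_mul, hη2]
      rw [mul_pow, mul_pow, h2]
      ring
    have hbern : 1 + k * (δ/2) ≤ (1 + δ/2)^k := by
      have := one_add_mul_le_pow (a := δ/2) (by linarith) k
      linarith
    have hr4 : 1 ≤ r^4 := one_le_pow₀ hr
    have hwk : w ^ k = Real.exp (-(ε^2*δ/4) * k) := by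
      rw [hwdef, ← Real.exp_nat_mul]
      ring_nf
    have hrhs : 2 * Real.exp (-(ε^2*r^4/2)) * w ^ k
        = 2 * Real.exp (-(ε^2*r^4/2) + -(ε^2*δ/4)*k) := by
      rw [hwk, mul_assoc, ← Real.exp_add]
    rw [hrhs]
    have hmono : -(1/2:ℝ) * (ε * r^2 * η^k)^2 ≤ -(ε^2*r^4/2) + -(ε^2*δ/4) * k := by
      rw [hsq]
      have hk0 : (0:ℝ) ≤ k := Nat.cast_nonneg k
      have hXR : (0:ℝ) ≤ ε^2 * r^4 := by positivity
      have hmul : ε^2 * r^4 * (1 + k * (δ/2)) ≤ ε^2 * r^4 * (1 + δ/2)^k :=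
        mul_le_mul_of_nonneg_left hbern hXR
      have htriv : 0 ≤ ε^2 * (r^4 - 1) * (k * (δ/2)) := by
        have h1 : (0:ℝ) ≤ r^4 - 1 := by linarith
        have h2 : (0:ℝ) ≤ k * (δ/2) := mul_nonneg hk0 (by linarith)
        positivity
      nlinarith [htriv, hmul]
    exact mul_le_mul_of_nonneg_left (Real.exp_le_exp.2 hmono) (by norm_num)
  -- union bound
  have hUnion : ∀ r : ℝ, 1 ≤ r →
      ℙ (⋃ k : ℕ, B r k) ≤ ENNReal.ofReal (D * Real.exp (-(ε^2*r^4/2))) := by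
    intro r hr
    refine le_trans (measure_iUnion_le _) ?_
    have hsummable : Summable (fun k : ℕ => 2 * Real.exp (-(ε^2*r^4/2)) * w ^ k) :=
      (summable_geometric_of_lt_one hw0.le hw1).mul_left _
    calc ∑' k, ℙ (B r k) ≤ ∑' k, ENNReal.ofReal (2 * Real.exp (-(ε^2*r^4/2)) * w ^ k) :=
          ENNReal.tsum_le_tsum (fun k => hpB r hr k)
      _ = ENNReal.ofReal (∑' k : ℕ, 2 * Real.exp (-(ε^2*r^4/2)) * w ^ k) :=
          (ENNReal.ofReal_tsum_of_nonneg (fun k => by positivity) hsummable).symm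
      _ = ENNReal.ofReal (D * Real.exp (-(ε^2*r^4/2))) := by
          rw [tsum_mul_left, tsum_geometric_of_lt_one hw0.le hw1]
          congr 1
          rw [hDdef]; ring
  have hBmono : ∀ r : ℝ, 1 ≤ r → ∀ k, B r k ⊆ B 1 k := by
    intro r hr k ω hω
    simp only [hBdef, Set.mem_preimage, hTdef, Set.mem_setOf_eq] at *
    have h1 : (1:ℝ) ≤ r^2 := one_le_pow₀ hr
    have h2 : (0:ℝ) < η ^ k := pow_pos hη0 k
    nlinarith [mul_nonneg (mul_nonneg (sub_nonneg.2 h1) hε0.le) h2.le]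
  -- complement events
  set S : ℕ → Set ℂ := fun k => {x : ℂ | ‖x‖ ≤ ε * 1^2 * η^k} with hSdef
  have hSmeas : ∀ k, MeasurableSet (S k) :=
    fun k => measurableSet_le continuous_norm.measurable measurable_const
  set G : ℕ → Set Ω := fun k => ζ k ⁻¹' S k with hGdef
  have hGcompl : ∀ k, G k = (B 1 k)ᶜ := by
    intro k; ext ω
    simp [hGdef, hBdef, hSdef, hTdef, not_lt]
  have hprod : ∀ N, ℙ (⋂ k ∈ Finset.range N, G k) = ∏ k ∈ Finset.range N, ℙ (G k) :=
    fun N => hindep.measure_inter_preimage_eq_mul (Finset.range N) (fun k _ => hSmeas k)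
  have hGpos : ∀ k, 0 < ℙ (G k) := by
    intro k
    have h1 : ℙ (G k) = stdComplexGaussian (S k) := by
      rw [hGdef, ← Measure.map_apply (hmeas k) (hSmeas k), hdist k]
    rw [h1]
    refine lt_of_lt_of_le
      (stdComplexGaussian_closedBall_pos (t := ε * 1^2 * η^k) (by positivity))
      (measure_mono ?_)
    intro x hx
    have : ‖x‖ ≤ ε * 1^2 * η^k := by
      simpa [Complex.dist_eq] using mem_closedBall.1 hx
    simpa [hSdef] using this
  set p : ℕ → ℝ := fun k => (ℙ (B 1 k)).toReal with hpdef
  have hp0 : ∀ k, 0 ≤ p k := fun k => ENNReal.toReal_nonneg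
  have hp1 : ∀ k, p k ≤ 1 := fun k => by
    rw [hpdef]
    exact ENNReal.toReal_le_of_le_ofReal zero_le_one (by simpa using prob_le_one)
  have hpw : ∀ k, p k ≤ 2 * w ^ k := by
    intro k
    have h := hpB 1 le_rfl k
    have h2 : (2:ℝ) * Real.exp (-(ε^2*1^4/2)) * w ^ k ≤ 2 * w ^ k := by
      have he1 : Real.exp (-(ε^2*1^4/2)) ≤ 1 := by
        rw [Real.exp_le_one_iff]
        have : 0 < ε^2*1^4/2 := by positivity
        linarith
      have hwk : (0:ℝ) ≤ w ^ k := by positivity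
      nlinarith
    exact le_trans (ENNReal.toReal_le_of_le_ofReal (by positivity) h) h2
  have hpwE : ∀ k, ℙ (B 1 k) ≤ ENNReal.ofReal (2 * w ^ k) := by
    intro k
    refine le_trans (hpB 1 le_rfl k) (ENNReal.ofReal_le_ofReal ?_)
    have he1 : Real.exp (-(ε^2*1^4/2)) ≤ 1 := by
      rw [Real.exp_le_one_iff]
      have : 0 < ε^2*1^4/2 := by positivity
      linarith
    have hwk : (0:ℝ) ≤ w ^ k := by positivity
    nlinarith
  have hgk : ∀ k, (ℙ (G k)).toReal = 1 - p k := by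
    intro k
    rw [hGcompl k, measure_compl (hBmeas 1 k) (measure_ne_top _ _), measure_univ,
      ENNReal.toReal_sub_of_le prob_le_one ENNReal.one_ne_top, ENNReal.toReal_one, hpdef]
  have hgkpos : ∀ k, 0 < 1 - p k := fun k =>
    hgk k ▸ ENNReal.toReal_pos (hGpos k).ne' (measure_ne_top _ _)
  -- choose K₀ with D * w ^ K₀ ≤ 1/2
  obtain ⟨K₀, hK₀⟩ : ∃ n : ℕ, D * w ^ n ≤ 1/2 := by
    obtain ⟨n, hn⟩ := exists_pow_lt_of_lt_one (show (0:ℝ) < (1/2)/D by positivity) hw1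
    refine ⟨n, le_of_lt ?_⟩
    have h := (lt_div_iff₀ hD0).1 hn
    linarith
  have hIcoSum : ∀ a N : ℕ, ∑ k ∈ Finset.Ico a N, p k ≤ D * w ^ a := by
    intro a N
    have hsum2 : ∑ k ∈ Finset.Ico a N, (2:ℝ) * w ^ k
        = 2 * w ^ a * ∑ j ∈ Finset.range (N - a), w ^ j := by
      rw [Finset.sum_Ico_eq_sum_range, Finset.mul_sum]
      exact Finset.sum_congr rfl fun j _ => by rw [pow_add]; ring
    calc ∑ k ∈ Finset.Ico a N, p k ≤ ∑ k ∈ Finset.Ico a N, 2 * w ^ k :=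
          Finset.sum_le_sum (fun k _ => hpw k)
      _ = 2 * w ^ a * ∑ j ∈ Finset.range (N - a), w ^ j := hsum2
      _ ≤ 2 * w ^ a * (1-w)⁻¹ := by
          have hs : ∑ j ∈ Finset.range (N - a), w ^ j ≤ (1-w)⁻¹ := by
            have h := Summable.sum_le_tsum (Finset.range (N-a)) (fun j _ => by positivity)
              (summable_geometric_of_lt_one hw0.le hw1)
            rwa [tsum_geometric_of_lt_one hw0.le hw1] at h
          exact mul_le_mul_of_nonneg_left hs (by positivity)
      _ = D * w ^ a := by rw [hDdef]; ring
  -- finite product lower bound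
  have hGmeas : ∀ k, MeasurableSet (G k) := fun k => (hmeas k) (hSmeas k)
  set P0 : ℝ := ∏ k ∈ Finset.range K₀, (1 - p k) with hP0def
  have hP0pos : 0 < P0 := Finset.prod_pos (fun k _ => hgkpos k)
  have hP0le : P0 ≤ 1 :=
    Finset.prod_le_one (fun k _ => (hgkpos k).le) (fun k _ => by linarith [hp0 k])
  set m₂ : ℝ := P0 * (1/2) with hm2def
  have hm2pos : 0 < m₂ := by rw [hm2def]; positivity
  have hm2le : m₂ ≤ 1/2 := by rw [hm2def]; nlinarith
  have hprodlb : ∀ N, K₀ ≤ N → ENNReal.ofReal m₂ ≤ ℙ (⋂ k ∈ Finset.range N, G k) := by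
    intro N hN
    rw [hprod N]
    have htoReal : (∏ k ∈ Finset.range N, ℙ (G k)).toReal = ∏ k ∈ Finset.range N, (1 - p k) := by
      rw [ENNReal.toReal_prod]
      exact Finset.prod_congr rfl fun k _ => hgk k
    have hsplit : ∏ k ∈ Finset.range N, (1 - p k)
        = P0 * ∏ k ∈ Finset.Ico K₀ N, (1 - p k) := by
      rw [hP0def, Finset.range_eq_Ico, Finset.range_eq_Ico]
      exact (Finset.prod_Ico_consecutive (fun k => 1 - p k) (Nat.zero_le K₀) hN).symm
    have hWei : 1/2 ≤ ∏ k ∈ Finset.Ico K₀ N, (1 - p k) := by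
      have h1 := one_sub_sum_le_prod_one_sub (Finset.Ico K₀ N) p
        (fun k _ => hp0 k) (fun k _ => hp1 k)
      have h2 := hIcoSum K₀ N
      linarith [hK₀]
    have hge : m₂ ≤ ∏ k ∈ Finset.range N, (1 - p k) := by
      rw [hsplit, hm2def]
      nlinarith [mul_le_mul_of_nonneg_left hWei hP0pos.le]
    exact ENNReal.ofReal_le_of_le_toReal (htoReal ▸ hge)
  -- choose N₁
  obtain ⟨N₁, hN₁K, hN₁⟩ : ∃ N, K₀ ≤ N ∧ D * w ^ N ≤ m₂/2 := by
    obtain ⟨n, hn⟩ := exists_pow_lt_of_lt_one (show (0:ℝ) < (m₂/2)/D by positivity) hw1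
    refine ⟨max K₀ n, le_max_left _ _, ?_⟩
    have hmono : w ^ (max K₀ n) ≤ w ^ n :=
      pow_le_pow_of_le_one hw0.le hw1.le (le_max_right _ _)
    have h := (lt_div_iff₀ hD0).1 hn
    nlinarith [mul_le_mul_of_nonneg_left hmono hD0.le]
  set AA : Set Ω := ⋂ k : ℕ, G k with hAAdef
  have htail : ∑' j : ℕ, ℙ (B 1 (N₁ + j)) ≤ ENNReal.ofReal (m₂/2) := by
    have hsummable : Summable (fun j : ℕ => 2 * w ^ N₁ * w ^ j) :=
      (summable_geometric_of_lt_one hw0.le hw1).mul_left _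
    calc ∑' j, ℙ (B 1 (N₁ + j)) ≤ ∑' j : ℕ, ENNReal.ofReal (2 * w ^ N₁ * w ^ j) := by
          refine ENNReal.tsum_le_tsum fun j => le_trans (hpwE (N₁ + j)) (le_of_eq ?_)
          rw [pow_add]; ring_nf
      _ = ENNReal.ofReal (∑' j : ℕ, 2 * w ^ N₁ * w ^ j) :=
          (ENNReal.ofReal_tsum_of_nonneg (fun j => by positivity) hsummable).symm
      _ = ENNReal.ofReal (D * w ^ N₁) := by
          rw [tsum_mul_left, tsum_geometric_of_lt_one hw0.le hw1]
          congr 1; rw [hDdef]; ring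
      _ ≤ ENNReal.ofReal (m₂/2) := ENNReal.ofReal_le_ofReal hN₁
  have hsub5 : (⋂ k ∈ Finset.range N₁, G k) ⊆ AA ∪ ⋃ j : ℕ, B 1 (N₁ + j) := by
    intro ω hω
    by_cases hall : ω ∈ AA
    · exact Or.inl hall
    · right
      rw [hAAdef] at hall
      simp only [Set.mem_iInter, not_forall] at hall
      obtain ⟨k, hk⟩ := hall
      have hkN : N₁ ≤ k := by
        by_contra hlt
        push_neg at hlt
        exact hk (Set.mem_iInter₂.1 hω k (Finset.mem_range.2 hlt))
      refine Set.mem_iUnion.2 ⟨k - N₁, ?_⟩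
      rw [Nat.add_sub_cancel' hkN]
      rw [hGcompl k] at hk
      exact Set.not_notMem.1 hk
  have hAAlb : ENNReal.ofReal (m₂/2) ≤ ℙ AA := by
    have h1 : ENNReal.ofReal m₂ ≤ ℙ AA + ENNReal.ofReal (m₂/2) := by
      refine le_trans (hprodlb N₁ hN₁K) (le_trans (measure_mono hsub5) ?_)
      refine le_trans (measure_union_le _ _) ?_
      exact add_le_add le_rfl (le_trans (measure_iUnion_le _) htail)
    have h2 : ENNReal.ofReal m₂ - ENNReal.ofReal (m₂/2) ≤ ℙ AA := tsub_le_iff_right.2 h1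
    rwa [← ENNReal.ofReal_sub _ (by positivity : (0:ℝ) ≤ m₂/2),
      show m₂ - m₂/2 = m₂/2 by ring] at h2
  set m : ℝ := m₂/2 with hmdef
  have hm0 : 0 < m := by rw [hmdef]; positivity
  have hm1 : m < 1 := by rw [hmdef]; linarith
  have hmid : ℙ (⋃ k : ℕ, B 1 k) ≤ ENNReal.ofReal (1 - m) := by
    have hU : (⋃ k : ℕ, B 1 k) = AAᶜ := by
      rw [hAAdef, Set.compl_iInter]
      exact Set.iUnion_congr fun k => by rw [hGcompl k, compl_compl]
    rw [hU, measure_compl (MeasurableSet.iInter fun k => hGmeas k) (measure_ne_top _ _),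
      measure_univ]
    calc 1 - ℙ AA ≤ 1 - ENNReal.ofReal m := tsub_le_tsub_left (hmdef ▸ hAAlb) 1
      _ = ENNReal.ofReal (1 - m) := by
          rw [ENNReal.ofReal_sub 1 hm0.le, ENNReal.ofReal_one]
  -- final constants
  set R₀ : ℝ := 1 + 4/ε^2 * max 0 (Real.log D) with hR₀def
  have hR₀1 : 1 ≤ R₀ := by
    have h0 : 0 ≤ 4/ε^2 * max 0 (Real.log D) :=
      mul_nonneg (by positivity) (le_max_left 0 _)
    rw [hR₀def]
    linarith
  have hR₀pos : 0 < R₀ := by linarith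
  set c : ℝ := min (ε^2/4) (Real.log (1/(1-m)) / R₀) with hcdef
  have hlogpos : 0 < Real.log (1/(1-m)) := by
    apply Real.log_pos
    rw [lt_div_iff₀ (by linarith : (0:ℝ) < 1 - m)]
    linarith
  have hc0 : 0 < c := lt_min (by positivity) (div_pos hlogpos hR₀pos)
  refine ⟨c, hc0, ?_⟩
  intro r hr
  have hr0 : (0:ℝ) < r := lt_of_lt_of_le one_pos hr
  rcases le_or_gt (r^4) R₀ with hcase | hcase
  · -- mid range
    refine le_trans (measure_mono (hinc r hr))
      (le_trans (measure_mono (Set.iUnion_mono (fun k => hBmono r hr k)))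
        (le_trans hmid (ENNReal.ofReal_le_ofReal ?_)))
    have h2 : c * r^4 ≤ c * R₀ := mul_le_mul_of_nonneg_left hcase hc0.le
    have h3 : c * R₀ ≤ Real.log (1/(1-m)) := by
      have hmin := min_le_right (ε^2/4) (Real.log (1/(1-m)) / R₀)
      calc c * R₀ ≤ (Real.log (1/(1-m)) / R₀) * R₀ :=
            mul_le_mul_of_nonneg_right hmin hR₀pos.le
        _ = Real.log (1/(1-m)) := by field_simp
    have h4 : Real.log (1-m) ≤ -c * r^4 := by
      rw [show Real.log (1/(1-m)) = - Real.log (1-m) by rw [one_div, Real.log_inv]] at h3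
      linarith
    calc 1 - m = Real.exp (Real.log (1-m)) := (Real.exp_log (by linarith)).symm
      _ ≤ Real.exp (-c * r^4) := Real.exp_le_exp.2 h4
  · -- large range
    refine le_trans (measure_mono (hinc r hr))
      (le_trans (hUnion r hr) (ENNReal.ofReal_le_ofReal ?_))
    have hεne : (ε:ℝ) ≠ 0 := hε0.ne'
    have h2 : c * r^4 ≤ ε^2/4 * r^4 :=
      mul_le_mul_of_nonneg_right (min_le_left _ _) (by positivity)
    have h3 : Real.log D ≤ max 0 (Real.log D) := le_max_right _ _
    have h5 : max 0 (Real.log D) = ε^2/4 * (R₀ - 1) := by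
      rw [hR₀def]
      field_simp
      ring
    have h6 : ε^2/4 * (R₀ - 1) ≤ ε^2/4 * (r^4 - 1) :=
      mul_le_mul_of_nonneg_left (by linarith) (by positivity)
    have hlogD : Real.log D ≤ ε^2*r^4/2 - c * r^4 := by nlinarith [sq_nonneg ε]
    calc D * Real.exp (-(ε^2*r^4/2))
        = Real.exp (Real.log D + -(ε^2*r^4/2)) := by
          rw [Real.exp_add, Real.exp_log hD0]
      _ ≤ Real.exp (-c * r^4) := Real.exp_le_exp.2 (by linarith)
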